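/- Let K be a finite extension of Q_p containing ζ_{p^n}, with e = v_K(p), e₀ = e/(p-1), c_i = ie + e₀. For n > 1 and m > e + e₀, the map induced by multiplication by p (i.e., raising to the p-th power) gives an isomorphism U_{n-1}^{m-e} ≅ U_n^m, where U_n^j is the image of 1 + m_K^j in K^×/(K^×)^{p^n}. -/
import Mathlib


/-- Data of a normalized discrete (additive) valuation on a field `K`:
`v : K → ℤ ∪ {∞}` with `v(x) = ∞ ↔ x = 0`, multiplicative, ultrametric and surjective
(so `K` is a discrete valuation field, `O_K = {v ≥ 0}`, `m_K = {v > 0}`). -/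
structure DVF (K : Type) [Field K] where
  v : K → WithTop ℤ
  v_top_iff : ∀ x : K, v x = ⊤ ↔ x = 0
  v_mul : ∀ x y : K, v (x * y) = v x + v y
  v_add : ∀ x y : K, min (v x) (v y) ≤ v (x + y)
  v_surj : ∀ n : ℤ, ∃ x : K, v x = (n : WithTop ℤ)

namespace DVF

variable {K : Type} [Field K] (V : DVF K)

/-- The sequence `s` converges to `L` in the valuation topology of `V`. -/
def Tendsto (s : ℕ → K) (L : K) : Prop :=
  ∀ N : ℤ, ∃ M : ℕ, ∀ m : ℕ, M ≤ m → (N : WithTop ℤ) ≤ V.v (s m - L)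

/-- `K` is complete with respect to the valuation `V`: every Cauchy sequence converges. -/
def IsComplete : Prop :=
  ∀ s : ℕ → K,
    (∀ N : ℤ, ∃ M : ℕ, ∀ m k : ℕ, M ≤ m → M ≤ k → (N : WithTop ℤ) ≤ V.v (s m - s k)) →
    ∃ L : K, V.Tendsto s L

/-- The residue field `O_K/m_K` (of characteristic `p`) is perfect:
every residue class is a `p`-th power. -/
def ResiduePerfect (p : ℕ) : Prop :=
  ∀ x : K, 0 ≤ V.v x → ∃ y : K, 0 ≤ V.v y ∧ 0 < V.v (x - y ^ p)

/-- The residue field `O_K/m_K` is finite. -/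
def ResidueFinite : Prop :=
  ∃ S : Finset K, ∀ x : K, 0 ≤ V.v x → ∃ y ∈ S, 0 < V.v (x - y)

/-- `K` is Henselian: simple roots of integral polynomials lift from the residue field. -/
def IsHenselian : Prop :=
  ∀ f : Polynomial K, (∀ i : ℕ, 0 ≤ V.v (f.coeff i)) →
    ∀ a : K, 0 ≤ V.v a → 0 < V.v (f.eval a) → V.v (f.derivative.eval a) = 0 →
      ∃ b : K, f.eval b = 0 ∧ 0 < V.v (b - a)

end DVF

namespace DVF
variable {K : Type} [Field K] (V : DVF K)


lemma v_zero' : V.v 0 = ⊤ := (V.v_top_iff 0).2 rfl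

lemma v_ne_top' {x : K} (hx : x ≠ 0) : V.v x ≠ ⊤ := fun h => hx ((V.v_top_iff x).1 h)

lemma v_one' : V.v 1 = 0 := by
  obtain ⟨a, ha⟩ := WithTop.ne_top_iff_exists.1 (V.v_ne_top' (one_ne_zero (α := K)))
  have h := V.v_mul 1 1
  rw [one_mul, ← ha] at h
  have h2 : a = a + a := by exact_mod_cast h
  have h3 : a = 0 := by omega
  rw [← ha, h3]; rfl

lemma v_neg_one' : V.v (-1 : K) = 0 := by
  obtain ⟨a, ha⟩ := WithTop.ne_top_iff_exists.1 (V.v_ne_top' (neg_ne_zero.2 (one_ne_zero (α := K))))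
  have h := V.v_mul (-1 : K) (-1)
  rw [neg_mul_neg, one_mul, V.v_one', ← ha] at h
  have h2 : (0 : ℤ) = a + a := by exact_mod_cast h
  have h3 : a = 0 := by omega
  rw [← ha, h3]; rfl

lemma v_neg' (x : K) : V.v (-x) = V.v x := by
  have h := V.v_mul (-1 : K) x
  rw [neg_one_mul, V.v_neg_one', zero_add] at h
  exact h

lemma v_sub_comm' (x y : K) : V.v (x - y) = V.v (y - x) := by
  rw [← V.v_neg' (x - y), neg_sub]

lemma v_sub_le' (x y : K) : min (V.v x) (V.v y) ≤ V.v (x - y) := by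
  have := V.v_add x (-y)
  rw [V.v_neg'] at this
  simpa [sub_eq_add_neg] using this

lemma v_pow_zero' {x : K} (hx : V.v x = 0) (k : ℕ) : V.v (x ^ k) = 0 := by
  induction k with
  | zero => simpa using V.v_one'
  | succ k ih => rw [pow_succ, V.v_mul, ih, hx, add_zero]

lemma v_nat_nonneg' (N : ℕ) : 0 ≤ V.v (N : K) := by
  induction N with
  | zero => simp [V.v_zero']
  | succ N ih =>
    have := V.v_add (N : K) 1
    rw [V.v_one'] at this
    push_cast
    exact le_trans (le_min ih le_rfl) this

lemma v_pow_le' {x : K} {t : ℤ} (h : (t : WithTop ℤ) ≤ V.v x) (k : ℕ) :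
    (((k : ℤ) * t : ℤ) : WithTop ℤ) ≤ V.v (x ^ k) := by
  induction k with
  | zero => simp [V.v_one']
  | succ k ih =>
    rw [pow_succ, V.v_mul]
    have : (((k : ℤ) * t + t : ℤ) : WithTop ℤ) ≤ V.v (x ^ k) + V.v x := by
      rw [WithTop.coe_add]; exact add_le_add ih h
    have heq : ((k+1 : ℕ) : ℤ) * t = (k:ℤ)*t + t := by push_cast; ring
    rw [heq]; exact this

lemma v_sum' {ι : Type*} (S : Finset ι) (f : ι → K) (c : WithTop ℤ)
    (h : ∀ i ∈ S, c ≤ V.v (f i)) : c ≤ V.v (∑ i ∈ S, f i) := by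
  classical
  induction S using Finset.induction_on with
  | empty => simp [V.v_zero']
  | @insert a s hx ih =>
    rw [Finset.sum_insert hx]
    refine le_trans (le_min (h a (Finset.mem_insert_self a s))
      (ih fun i hi => h i (Finset.mem_insert_of_mem hi))) (V.v_add _ _)

lemma v_unit' {w : K} (hw : 0 < V.v (w - 1)) : V.v w = 0 := by
  have h1 : (0 : WithTop ℤ) ≤ V.v w := by
    have := V.v_add (w - 1) 1
    rw [sub_add_cancel, V.v_one'] at this
    exact le_trans (le_min hw.le le_rfl) this
  rcases lt_or_eq_of_le h1 with h2 | h2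
  · exfalso
    have := V.v_sub_le' w (w - 1)
    rw [sub_sub_cancel, V.v_one'] at this
    exact absurd this (not_le.2 (lt_min h2 hw))
  · exact h2.symm

lemma v_div' {x y : K} (hy : y ≠ 0) : V.v x = V.v (x / y) + V.v y := by
  have h := V.v_mul (x / y) y
  rw [div_mul_cancel₀ _ hy] at h
  exact h

lemma wt_add_le' {a b : WithTop ℤ} {x y : ℤ} (ha : (x : WithTop ℤ) ≤ a)
    (hb : (y : WithTop ℤ) ≤ b) : ((x + y : ℤ) : WithTop ℤ) ≤ a + b := by
  rw [WithTop.coe_add]; exact add_le_add ha hb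

lemma wt_sub_le' {a : WithTop ℤ} {t c : ℤ} (h : (t : WithTop ℤ) ≤ a + (c : ℤ)) :
    ((t - c : ℤ) : WithTop ℤ) ≤ a := by
  cases a with
  | top => exact le_top
  | coe a =>
    rw [← WithTop.coe_add, WithTop.coe_le_coe] at h
    exact WithTop.coe_le_coe.2 (by omega)

lemma wt_mono' {x y : ℤ} (h : x ≤ y) : (x : WithTop ℤ) ≤ (y : WithTop ℤ) :=
  WithTop.coe_le_coe.2 h

end DVF

/-- Lemma 2.6 (iii) for `G_m`, cf. Lemma A.1. Let `K` be a finite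
extension of `ℚ_p` (a complete discretely valued field of characteristic 0 with finite
residue field) containing `ζ_{p^n}`, with `e = v_K(p)`, `e₀ = e/(p-1)`.  For `n > 1`
and `m > e + e₀`, raising to the `p`-th power induces an isomorphism
`U_{n-1}^{m-e} ≅ U_n^m`, where `U_n^j` is the image of `1 + m_K^j` in
`K^×/(K^×)^{p^n}` (stated elementwise as surjectivity and injectivity). -/
theorem stmt12 (p n : ℕ) (hp : p.Prime) (hn : 1 < n)
    (K : Type) [Field K] [CharZero K]
    (V : DVF K) (hcomp : V.IsComplete) (hfin : V.ResidueFinite)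
    (e : ℕ) (he : 0 < e) (hvp : V.v (p : K) = ((e : ℤ) : WithTop ℤ))
    (ζ : K) (hζ : IsPrimitiveRoot ζ (p ^ n))
    (m : ℕ) (hm : (e : ℚ) + (e : ℚ) / ((p : ℚ) - 1) < (m : ℚ)) :
    -- surjectivity: every class in U_n^m is the p-th power of a class in U_{n-1}^{m-e}
    (∀ u : K, ((m : ℤ) : WithTop ℤ) ≤ V.v (u - 1) →
      ∃ w z : K, ((m : ℤ) - e : ℤ) ≤ V.v (w - 1) ∧ z ≠ 0 ∧ u = w ^ p * z ^ p ^ n) ∧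
    -- injectivity: if the p-th powers agree in U_n^m then the classes agree in U_{n-1}^{m-e}
    (∀ w w' : K, (((m : ℤ) - e : ℤ) : WithTop ℤ) ≤ V.v (w - 1) →
      (((m : ℤ) - e : ℤ) : WithTop ℤ) ≤ V.v (w' - 1) →
      (∃ z : K, z ≠ 0 ∧ w ^ p = w' ^ p * z ^ p ^ n) →
      ∃ z : K, z ≠ 0 ∧ w = w' * z ^ p ^ (n - 1)) := by
  obtain ⟨q, rfl⟩ : ∃ q, p = q + 2 := ⟨p - 2, by have := hp.two_le; omega⟩
  have hpK : ((q + 2 : ℕ) : K) ≠ 0 := Nat.cast_ne_zero.2 (by omega)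
  -- numeric facts
  have hq1 : (0:ℚ) < (q:ℚ) + 1 := by positivity
  have hm' : (e:ℚ) + (e:ℚ) / ((q:ℚ) + 1) < (m:ℚ) := by push_cast at hm; convert hm using 3 <;> ring
  have he' : (0:ℚ) < (e:ℚ) := by exact_mod_cast he
  have hem : e + 1 ≤ m := by
    have h1 : (0:ℚ) < (e:ℚ)/((q:ℚ)+1) := div_pos he' hq1
    have h2 : (e:ℚ) < (m:ℚ) := by linarith
    have h3 : e < m := by exact_mod_cast h2
    omega
  have hkey : e * (q+2) + 1 ≤ m * (q+1) := by
    have h3 := mul_lt_mul_of_pos_right hm' hq1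
    rw [add_mul, div_mul_cancel₀ _ (ne_of_gt hq1)] at h3
    have h4 : ((e * (q+2) : ℕ) : ℚ) < ((m * (q+1) : ℕ) : ℚ) := by push_cast; nlinarith
    have h5 : e * (q+2) < m * (q+1) := by exact_mod_cast h4
    omega
  have htkey : ∀ t : ℤ, (m:ℤ) ≤ t → (e:ℤ) * ((q:ℤ)+2) + 1 ≤ t * ((q:ℤ)+1) := by
    intro t ht
    have h1 : (e:ℤ) * ((q:ℤ)+2) + 1 ≤ (m:ℤ) * ((q:ℤ)+1) := by exact_mod_cast hkey
    nlinarith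
  constructor
  · -- surjectivity
    intro u hu
    have key : ∀ (t : ℤ) (w : K), (m:ℤ) ≤ t →
        ((((m:ℤ) - e : ℤ)) : WithTop ℤ) ≤ V.v (w - 1) →
        ((t : ℤ) : WithTop ℤ) ≤ V.v (u - w ^ (q+2)) →
        (((((m:ℤ) - e : ℤ)) : WithTop ℤ) ≤
            V.v ((w + (u - w ^ (q+2)) / (((q+2:ℕ):K) * w ^ (q+1))) - 1)) ∧
        ((((t + 1 : ℤ)) : WithTop ℤ) ≤
            V.v (u - (w + (u - w ^ (q+2)) / (((q+2:ℕ):K) * w ^ (q+1))) ^ (q+2))) ∧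
        ((((t - e : ℤ)) : WithTop ℤ) ≤
            V.v ((w + (u - w ^ (q+2)) / (((q+2:ℕ):K) * w ^ (q+1))) - w)) := by
      intro t w ht hw1 hwu
      have hmepos : (0:ℤ) < (m:ℤ) - e := by omega
      have hvw : V.v w = 0 := by
        refine V.v_unit' (lt_of_lt_of_le ?_ hw1)
        exact_mod_cast hmepos
      have hw0 : w ≠ 0 := by
        intro h; rw [h, V.v_zero'] at hvw; exact (by simp : (⊤:WithTop ℤ) ≠ 0) hvw
      have hden : ((q+2:ℕ):K) * w ^ (q+1) ≠ 0 := mul_ne_zero hpK (pow_ne_zero _ hw0)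
      set s : K := (u - w ^ (q+2)) / (((q+2:ℕ):K) * w ^ (q+1)) with hs
      have hvden : V.v (((q+2:ℕ):K) * w ^ (q+1)) = ((e:ℤ) : WithTop ℤ) := by
        rw [V.v_mul, hvp, V.v_pow_zero' hvw, add_zero]
      have hvs : (((t - e : ℤ)) : WithTop ℤ) ≤ V.v s := by
        apply DVF.wt_sub_le'
        rw [hs, ← hvden, ← V.v_div' hden]
        exact hwu
      have hps : ((q+2:ℕ):K) * w ^ (q+1) * s = u - w ^ (q+2) := by
        rw [hs, mul_div_cancel₀ _ hden]
      have hexp : u - (w + s) ^ (q+2) =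
          -(∑ k ∈ Finset.range (q+1), w ^ k * s ^ (q+2-k) * ((q+2).choose k : K)) := by
        have hadd := add_pow w s (q+2)
        rw [Finset.sum_range_succ] at hadd
        rw [show Finset.range (q+2) = Finset.range ((q+1)+1) from rfl] at hadd
        rw [Finset.sum_range_succ] at hadd
        rw [show (q+2) - (q+1) = 1 from by omega, show (q+2) - (q+2) = 0 from by omega,
          show (q+2).choose (q+1) = q+2 from by
            rw [show q+2 = (q+1)+1 from rfl, Nat.choose_succ_self_right],
          Nat.choose_self] at hadd
        rw [hadd]
        push_cast at hps ⊢
        linear_combination -hps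
      refine ⟨?_, ?_, ?_⟩
      · have h1 : w + s - 1 = (w - 1) + s := by ring
        rw [h1]
        refine le_trans (le_min hw1 (le_trans (DVF.wt_mono' (by omega)) hvs)) (V.v_add _ _)
      · rw [hexp, V.v_neg']
        apply V.v_sum'
        intro k hk
        rw [Finset.mem_range] at hk
        have hterm : V.v (w ^ k * s ^ (q+2-k) * ((q+2).choose k : K)) =
            V.v (s ^ (q+2-k)) + V.v (((q+2).choose k : ℕ) : K) := by
          rw [V.v_mul, V.v_mul, V.v_pow_zero' hvw, zero_add]
        rw [hterm]
        rcases Nat.eq_zero_or_pos k with hk0 | hk0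
        · subst hk0
          rw [Nat.choose_zero_right, Nat.cast_one, V.v_one', add_zero, Nat.sub_zero]
          have hb := V.v_pow_le' hvs (q+2)
          refine le_trans (DVF.wt_mono' ?_) hb
          have := htkey t ht
          push_cast
          nlinarith
        · obtain ⟨c, hc⟩ := hp.dvd_choose_self (by omega : k ≠ 0) (by omega : k < q+2)
          have hvC : ((e:ℤ) : WithTop ℤ) ≤ V.v (((q+2).choose k : ℕ) : K) := by
            rw [hc, Nat.cast_mul, V.v_mul, hvp]
            exact le_add_of_nonneg_right (V.v_nat_nonneg' c)
          have hvS := V.v_pow_le' hvs (q+2-k)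
          have hcomb := DVF.wt_add_le' hvS hvC
          refine le_trans (DVF.wt_mono' ?_) hcomb
          have ha : (2:ℤ) ≤ ((q+2-k : ℕ):ℤ) := by omega
          have hte : (1:ℤ) ≤ t - e := by omega
          nlinarith [mul_le_mul_of_nonneg_right ha (by omega : (0:ℤ) ≤ t - e)]
      · have h2 : w + s - w = s := by ring
        rw [h2]
        exact hvs
    -- the sequence
    set W : ℕ → K :=
      fun k => (fun w => w + (u - w ^ (q+2)) / (((q+2:ℕ):K) * w ^ (q+1)))^[k] 1 with hW
    have hW0 : W 0 = 1 := rfl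
    have hWsucc : ∀ k, W (k+1) = W k + (u - (W k) ^ (q+2)) / (((q+2:ℕ):K) * (W k) ^ (q+1)) := by
      intro k
      simp only [hW, Function.iterate_succ_apply']
    have inv : ∀ k : ℕ, (((((m:ℤ) - e : ℤ)) : WithTop ℤ) ≤ V.v (W k - 1)) ∧
        ((((m:ℤ) + k : ℤ)) : WithTop ℤ) ≤ V.v (u - (W k) ^ (q+2)) := by
      intro k
      induction k with
      | zero =>
        constructor
        · rw [hW0]
          simp [V.v_zero']
        · rw [hW0, one_pow]
          simpa using hu
      | succ k ih =>
        have hk := key ((m:ℤ)+k) (W k) (by omega) ih.1 ih.2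
        constructor
        · rw [hWsucc k]; exact hk.1
        · rw [hWsucc k]
          have hcoe : ((m:ℤ) + ((k+1:ℕ):ℤ)) = ((m:ℤ)+(k:ℤ))+1 := by push_cast; ring
          rw [hcoe]
          exact hk.2.1
    have hdiff : ∀ k : ℕ, ((((m:ℤ) + k - e : ℤ)) : WithTop ℤ) ≤ V.v (W (k+1) - W k) := by
      intro k
      have hk := key ((m:ℤ)+k) (W k) (by omega) (inv k).1 (inv k).2
      rw [hWsucc k]
      exact hk.2.2
    have htel : ∀ k j : ℕ, ((((m:ℤ) + k - e : ℤ)) : WithTop ℤ) ≤ V.v (W (k+j) - W k) := by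
      intro k j
      induction j with
      | zero => simp [V.v_zero']
      | succ j ih =>
        have h1 : W (k+j+1) - W k = (W (k+j+1) - W (k+j)) + (W (k+j) - W k) := by ring
        rw [show k + (j+1) = (k+j)+1 from rfl, h1]
        refine le_trans (le_min ?_ ih) (V.v_add _ _)
        exact le_trans (DVF.wt_mono' (by omega)) (hdiff (k+j))
    obtain ⟨L, hL⟩ := hcomp W (by
      intro N
      refine ⟨(N + e).toNat, ?_⟩
      have hMN : N + (e:ℤ) ≤ (((N+e).toNat : ℕ) : ℤ) := Int.self_le_toNat _
      intro a b ha hb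
      rcases le_total b a with hba | hab
      · obtain ⟨j, rfl⟩ : ∃ j, a = b + j := ⟨a - b, by omega⟩
        exact le_trans (DVF.wt_mono' (by omega)) (htel b j)
      · obtain ⟨j, rfl⟩ : ∃ j, b = a + j := ⟨b - a, by omega⟩
        rw [V.v_sub_comm']
        exact le_trans (DVF.wt_mono' (by omega)) (htel a j))
    have hL1 : ((((m:ℤ) - e : ℤ)) : WithTop ℤ) ≤ V.v (L - 1) := by
      obtain ⟨M, hM⟩ := hL ((m:ℤ) - e)
      have h1 : L - 1 = -(W M - L) + (W M - 1) := by ring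
      rw [h1]
      refine le_trans (le_min ?_ (inv M).1) (V.v_add _ _)
      rw [V.v_neg']
      exact hM M le_rfl
    have hvL : V.v L = 0 := by
      refine V.v_unit' (lt_of_lt_of_le ?_ hL1)
      exact_mod_cast (by omega : (0:ℤ) < (m:ℤ) - e)
    have hWv : ∀ k, V.v (W k) = 0 := by
      intro k
      refine V.v_unit' (lt_of_lt_of_le ?_ (inv k).1)
      exact_mod_cast (by omega : (0:ℤ) < (m:ℤ) - e)
    have hfinal : u = L ^ (q+2) := by
      have hN : ∀ N : ℤ, (N : WithTop ℤ) ≤ V.v (u - L ^ (q+2)) := by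
        intro N
        obtain ⟨M, hM⟩ := hL N
        set k := max M (N.toNat) with hk
        have hkN : (N : ℤ) ≤ ((k:ℕ):ℤ) := le_trans (Int.self_le_toNat N)
          (by exact_mod_cast le_max_right M N.toNat)
        have h1 : (N : WithTop ℤ) ≤ V.v (u - (W k) ^ (q+2)) :=
          le_trans (DVF.wt_mono' (by omega)) (inv k).2
        have h2 : (N : WithTop ℤ) ≤ V.v ((W k) ^ (q+2) - L ^ (q+2)) := by
          have hgeo := geom_sum₂_mul (W k) L (q+2)
          rw [← hgeo, V.v_mul]
          have hsum : (0 : WithTop ℤ) ≤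
              V.v (∑ i ∈ Finset.range (q+2), (W k) ^ i * L ^ (q+2-1-i)) := by
            apply V.v_sum'
            intro i _
            rw [V.v_mul, V.v_pow_zero' (hWv k), V.v_pow_zero' hvL]
            norm_num
          have hdist : (N : WithTop ℤ) ≤ V.v (W k - L) := hM k (le_max_left _ _)
          calc (N : WithTop ℤ) = 0 + N := by rw [zero_add]
            _ ≤ _ := add_le_add hsum hdist
        have h3 : u - L ^ (q+2) = (u - (W k) ^ (q+2)) + ((W k) ^ (q+2) - L ^ (q+2)) := by ring
        rw [h3]
        exact le_trans (le_min h1 h2) (V.v_add _ _)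
      have htop : V.v (u - L ^ (q+2)) = ⊤ := by
        by_contra h
        obtain ⟨a, ha⟩ := WithTop.ne_top_iff_exists.1 h
        have h2 := hN (a+1)
        rw [← ha] at h2
        exact absurd (WithTop.coe_le_coe.1 h2) (by omega)
      exact sub_eq_zero.1 ((V.v_top_iff _).1 htop)
    exact ⟨L, 1, hL1, one_ne_zero, by rw [one_pow, mul_one]; exact hfinal⟩
  · -- injectivity
    rintro w w' hw hw' ⟨z, hz, hzz⟩
    have hmepos' : (0:WithTop ℤ) < (((m:ℤ) - e : ℤ) : WithTop ℤ) := by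
      exact_mod_cast (by omega : (0:ℤ) < (m:ℤ) - e)
    have hw'0 : w' ≠ 0 := by
      intro h
      have h1 : V.v (w' - 1) = 0 := by rw [h, zero_sub, V.v_neg_one']
      rw [h1] at hw'
      exact absurd (lt_of_lt_of_le hmepos' hw') (lt_irrefl _)
    have hζ0 : ζ ≠ 0 := hζ.ne_zero (by positivity)
    have hnn : (q+2) ^ (n-1) * (q+2) = (q+2) ^ n := by
      rw [← pow_succ]
      congr 1
      omega
    have hden0 : w' * z ^ ((q+2) ^ (n-1)) ≠ 0 := mul_ne_zero hw'0 (pow_ne_zero _ hz)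
    have hw0 : w ≠ 0 := by
      intro h
      apply mul_ne_zero (pow_ne_zero (q+2) hw'0) (pow_ne_zero ((q+2)^n) hz)
      rw [← hzz, h]
      simp
    have hη : (w / (w' * z ^ ((q+2) ^ (n-1)))) ^ (q+2) = 1 := by
      rw [div_pow, mul_pow, ← pow_mul, hnn, ← hzz]
      exact div_self (pow_ne_zero _ hw0)
    obtain ⟨i, hi_lt, hi⟩ := hζ.eq_pow_of_pow_eq_one (ξ := w / (w' * z ^ ((q+2) ^ (n-1)))) (by
      rw [← hnn, pow_mul', hη, one_pow])
    have hdvd : (q+2) ^ (n-1) ∣ i := by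
      have h1 : ζ ^ (i * (q+2)) = 1 := by rw [pow_mul, hi, hη]
      have h2 : (q+2) ^ n ∣ i * (q+2) := (hζ.pow_eq_one_iff_dvd _).1 h1
      rw [← hnn] at h2
      exact (mul_dvd_mul_iff_right (by omega : (q+2:ℕ) ≠ 0)).1 h2
    obtain ⟨c, hc⟩ := hdvd
    refine ⟨z * ζ ^ c, mul_ne_zero hz (pow_ne_zero _ hζ0), ?_⟩
    have hwd : w = ζ ^ i * (w' * z ^ ((q+2) ^ (n-1))) := by
      rw [hi, div_mul_cancel₀ _ hden0]
    rw [hwd, hc, show (q+2)^(n-1) * c = c * ((q+2)^(n-1)) from mul_comm _ _, pow_mul, mul_pow]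
    ring
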